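/- arXiv:1802.00578 — 6 statements merged into one kernel-verified Lean document; each statement's English description precedes it below -/
import Mathlib

section
/- For a random variable X following the falling factorial distribution with parameter (n, θ), the mean of X equals θ·L_n(θ) where L_n(θ) = Σ_{i=1}^n 1/(θ+i-1). -/
open MeasureTheory ProbabilityTheory Finset

noncomputable def ellFn (m : ℕ) (θ : ℝ) : ℝ := ∑ i ∈ Finset.Icc 1 m, ((i : ℝ) - 1) / (θ + i - 1) ^ 2
noncomputable def Lfn (m : ℕ) (θ : ℝ) : ℝ := ∑ i ∈ Finset.Icc 1 m, 1 / (θ + i - 1)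
noncomputable def ffPMF (n : ℕ) (θ : ℝ) (x : ℕ) : ℝ :=
  ((ascPochhammer ℕ n).coeff x : ℝ) * θ ^ x / (ascPochhammer ℝ n).eval θ

/-!
The law of `X` is `∑ₓ pₓ δₓ` with `pₓ = cₓ θˣ / P(θ)`, where `P = (θ)ₙ = ∑ₓ cₓ θˣ`, so
`𝔼 X = ∑ₓ x cₓ θˣ / P(θ) = θ P'(θ) / P(θ)`. Since `P(θ) = ∏_{j<n} (θ + j)`, its logarithmic
derivative is `∑_{j<n} 1 / (θ + j) = Lₙ(θ)`.

The hypothesis on `X` only prescribes the outer measures of its fibres, so measurability of `X`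
has to be recovered: the fibres are disjoint with masses summing to `μ univ = 1`, which forces
each of them to be null-measurable.
-/

namespace Polynomial

theorem sum_range_natCast_mul_coeff_mul_pow {R : Type*} [CommSemiring R] (p : R[X]) {N : ℕ}
    (hN : p.natDegree < N) (x : R) :
    ∑ i ∈ range N, (i : R) * p.coeff i * x ^ i = x * (derivative p).eval x := by
  rw [derivative_eval, sum_over_range' _ (fun _ => by simp) N hN, mul_sum]
  refine sum_congr rfl fun i _ => ?_
  cases i with
  | zero => simp
  | succ i => rw [Nat.add_sub_cancel, pow_succ]; ring

theorem ascPochhammer_coeff_natCast (S : Type*) [Semiring S] (n k : ℕ) :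
    ((ascPochhammer ℕ n).coeff k : S) = (ascPochhammer S n).coeff k := by
  rw [← ascPochhammer_map (Nat.castRingHom S), coeff_map, eq_natCast]

theorem eval_derivative_ascPochhammer {K : Type*} [Field K] (n : ℕ) {t : K}
    (h : (ascPochhammer K n).eval t ≠ 0) :
    (derivative (ascPochhammer K n)).eval t
      = (ascPochhammer K n).eval t * ∑ j ∈ range n, (t + j)⁻¹ := by
  induction n with
  | zero => simp
  | succ m ih =>
    rw [ascPochhammer_succ_eval, mul_ne_zero_iff] at h
    rw [ascPochhammer_succ_right, derivative_mul, sum_range_succ]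
    simp only [eval_add, eval_mul, ih h.1, derivative_add, derivative_X, eval_X, eval_natCast,
      derivative_natCast, add_zero, eval_one]
    field_simp [h.2]

end Polynomial

namespace MeasureTheory

variable {Ω α : Type*} [MeasurableSpace Ω] {μ : Measure Ω}

theorem nullMeasurableSet_of_measure_add_measure_compl_le [IsFiniteMeasure μ] {s : Set Ω}
    (h : μ s + μ sᶜ ≤ μ Set.univ) : NullMeasurableSet s μ := by
  set t := toMeasurable μ s
  set u := toMeasurable μ sᶜ
  have htu : t ∪ u = Set.univ :=
    Set.eq_univ_of_forall fun ω => (em (ω ∈ s)).imp (subset_toMeasurable μ s ·)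
      (subset_toMeasurable μ sᶜ ·)
  have hnull : μ (t ∩ u) = 0 := by
    have key := measure_union_add_inter (μ := μ) t (measurableSet_toMeasurable μ sᶜ)
    rw [htu, measure_toMeasurable, measure_toMeasurable] at key
    have : μ Set.univ + μ (t ∩ u) ≤ μ Set.univ + 0 := by rw [key, add_zero]; exact h
    exact le_zero_iff.mp ((ENNReal.add_le_add_iff_left (measure_ne_top μ _)).mp this)
  refine (measurableSet_toMeasurable μ s).nullMeasurableSet.congr (ae_eq_set.mpr ⟨?_, ?_⟩).symm
  · rw [Set.sdiff_eq_empty.mpr (subset_toMeasurable μ s), measure_empty]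
  · exact measure_mono_null (fun ω hω => Set.mem_inter hω.1 (subset_toMeasurable μ sᶜ hω.2)) hnull

variable [MeasurableSpace α] [Countable α] [MeasurableSingletonClass α]

theorem aemeasurable_of_tsum_measure_preimage_singleton_le [IsFiniteMeasure μ] {f : Ω → α}
    (h : ∑' a, μ (f ⁻¹' {a}) ≤ μ Set.univ) : AEMeasurable f μ := by
  classical
  have hfiber (a : α) : NullMeasurableSet (f ⁻¹' {a}) μ := by
    refine nullMeasurableSet_of_measure_add_measure_compl_le (le_trans ?_ h)
    rw [ENNReal.tsum_eq_add_tsum_ite a]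
    gcongr
    calc μ (f ⁻¹' {a})ᶜ ≤ μ (⋃ b, if b = a then ∅ else f ⁻¹' {b}) :=
          measure_mono fun ω hω => Set.mem_iUnion.mpr ⟨f ω, by simp_all⟩
      _ ≤ _ := (measure_iUnion_le _).trans_eq (tsum_congr fun b => by split_ifs <;> simp)
  refine NullMeasurable.aemeasurable fun s _ => ?_
  rw [← Set.biUnion_of_singleton s, Set.preimage_iUnion₂]
  exact .biUnion s.to_countable fun a _ => hfiber a

theorem map_eq_sum_smul_dirac_of_measure_preimage_singleton_eq_zero {f : Ω → α}
    (hf : AEMeasurable f μ) (s : Finset α) (hs : ∀ a ∉ s, μ (f ⁻¹' {a}) = 0) :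
    μ.map f = ∑ a ∈ s, μ (f ⁻¹' {a}) • Measure.dirac a := by
  classical
  refine Measure.ext_of_singleton fun b => ?_
  rw [Measure.map_apply_of_aemeasurable hf (measurableSet_singleton b)]
  simp only [Measure.coe_finsetSum, Finset.sum_apply, Measure.smul_apply, smul_eq_mul,
    Measure.dirac_apply' _ (measurableSet_singleton b), Set.indicator_apply, Set.mem_singleton_iff,
    Pi.one_apply, mul_ite, mul_one, mul_zero, Finset.sum_ite_eq']
  split_ifs with hb
  exacts [rfl, hs b hb]

theorem integral_comp_eq_sum_of_measure_preimage_singleton_eq_zero [IsFiniteMeasure μ]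
    {E : Type*} [NormedAddCommGroup E] [NormedSpace ℝ E] [CompleteSpace E] {f : Ω → α}
    (hf : AEMeasurable f μ) (s : Finset α) (hs : ∀ a ∉ s, μ (f ⁻¹' {a}) = 0) (g : α → E) :
    ∫ ω, g (f ω) ∂μ = ∑ a ∈ s, μ.real (f ⁻¹' {a}) • g a := by
  rw [← integral_map hf StronglyMeasurable.of_discrete.aestronglyMeasurable,
    map_eq_sum_smul_dirac_of_measure_preimage_singleton_eq_zero hf s hs,
    integral_finsetSum_measure fun a _ =>
      (integrable_dirac enorm_lt_top).smul_measure (measure_ne_top μ _)]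
  simp [integral_smul_measure, measureReal_def]

end MeasureTheory

open Polynomial

theorem Lfn_eq_sum_range (n : ℕ) (θ : ℝ) : Lfn n θ = ∑ j ∈ range n, (θ + j)⁻¹ := by
  rw [Lfn, ← Ico_add_one_right_eq_Icc, sum_Ico_eq_sum_range, add_tsub_cancel_right]
  refine sum_congr rfl fun j _ => ?_
  push_cast
  ring

section ffPMF

variable (n : ℕ)

theorem ffPMF_eq (θ : ℝ) (x : ℕ) :
    ffPMF n θ x = (ascPochhammer ℝ n).coeff x * θ ^ x / (ascPochhammer ℝ n).eval θ := by
  rw [ffPMF, ascPochhammer_coeff_natCast]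

theorem ffPMF_nonneg {θ : ℝ} (hθ : 0 < θ) (x : ℕ) : 0 ≤ ffPMF n θ x := by
  have := ascPochhammer_pos n θ hθ
  unfold ffPMF
  positivity

theorem ffPMF_eq_zero_of_lt (θ : ℝ) {x : ℕ} (hx : n < x) : ffPMF n θ x = 0 := by
  rw [ffPMF, coeff_eq_zero_of_natDegree_lt (by rwa [ascPochhammer_natDegree]), Nat.cast_zero,
    zero_mul, zero_div]

theorem sum_range_ffPMF {θ : ℝ} (hθ : 0 < θ) : ∑ x ∈ range (n + 1), ffPMF n θ x = 1 := by
  simp_rw [ffPMF_eq, ← sum_div]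
  rw [← eval_eq_sum_range' (by rw [ascPochhammer_natDegree]; omega)]
  exact div_self (ascPochhammer_pos n θ hθ).ne'

theorem sum_range_mul_ffPMF {θ : ℝ} (hθ : 0 < θ) :
    ∑ x ∈ range (n + 1), (x : ℝ) * ffPMF n θ x = θ * Lfn n θ := by
  have hP := (ascPochhammer_pos n θ hθ).ne'
  simp_rw [ffPMF_eq, mul_div_assoc', ← mul_assoc, ← sum_div]
  rw [sum_range_natCast_mul_coeff_mul_pow _ (by rw [ascPochhammer_natDegree]; omega),
    eval_derivative_ascPochhammer n hP, Lfn_eq_sum_range]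
  field_simp

theorem tsum_ofReal_ffPMF {θ : ℝ} (hθ : 0 < θ) : ∑' x, ENNReal.ofReal (ffPMF n θ x) = 1 := by
  rw [tsum_eq_sum (s := range (n + 1)) fun x hx => by
      rw [ffPMF_eq_zero_of_lt n θ (by simpa using hx), ENNReal.ofReal_zero],
    ← ENNReal.ofReal_sum_of_nonneg fun x _ => ffPMF_nonneg n hθ x, sum_range_ffPMF n hθ,
    ENNReal.ofReal_one]

end ffPMF

theorem ff_mean_general (Ω : Type*) [MeasurableSpace Ω] (μ : Measure Ω) [IsProbabilityMeasure μ]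
    (X : Ω → ℕ) (n : ℕ) (θ : ℝ) (hθ : 0 < θ)
    (hX : ∀ x : ℕ, μ {ω | X ω = x} = ENNReal.ofReal (ffPMF n θ x)) :
    ∫ ω, (X ω : ℝ) ∂μ = θ * Lfn n θ := by
  have hfiber (x : ℕ) : μ (X ⁻¹' {x}) = ENNReal.ofReal (ffPMF n θ x) := hX x
  have hXm : AEMeasurable X μ := aemeasurable_of_tsum_measure_preimage_singleton_le <| by
    simp_rw [hfiber, tsum_ofReal_ffPMF n hθ, measure_univ, le_refl]
  have hsupp (x : ℕ) (hx : x ∉ range (n + 1)) : μ (X ⁻¹' {x}) = 0 := by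
    rw [hfiber, ffPMF_eq_zero_of_lt n θ (by simpa using hx), ENNReal.ofReal_zero]
  rw [integral_comp_eq_sum_of_measure_preimage_singleton_eq_zero hXm _ hsupp (Nat.cast : ℕ → ℝ),
    ← sum_range_mul_ffPMF n hθ]
  refine sum_congr rfl fun x _ => ?_
  rw [measureReal_def, hfiber, ENNReal.toReal_ofReal (ffPMF_nonneg n hθ x), smul_eq_mul, mul_comm]

theorem ff_mean (Ω : Type*) [MeasurableSpace Ω] (μ : Measure Ω) [IsProbabilityMeasure μ]
    (X : Ω → ℕ) (n : ℕ) (θ : ℝ) (hn : 1 ≤ n) (hθ : 0 < θ)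
    (hX : ∀ x : ℕ, μ {ω | X ω = x} = ENNReal.ofReal (ffPMF n θ x)) :
    ∫ ω, (X ω : ℝ) ∂μ = θ * Lfn n θ :=
  ff_mean_general Ω μ X n θ hθ hX
end

section
/- Let θ ≥ 2 be real, s ≥ 2 an integer, and n an integer with n > 1 + (⌊θ⌋ − 1 + 1/s)/ℓ_{⌊θ⌋}(θ). Then s·ℓ_n(θ) > ℓ_{ns}(θ). -/
/-!
Write `f(x) = x / (θ + x) ^ 2`, so that `ℓ_m(θ) = ∑_{j < m} f(j)`. Since `f ≤ 1 / (4θ)` and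
`f(0) = 0`, we have `4θ ℓ_⌊θ⌋ ≤ ⌊θ⌋ - 1`, and the hypothesis forces `n > 4θ + 1`.
As `f` decreases on `[θ, ∞)`, each of the blocks `[kn, (k+1)n)`, `1 ≤ k < s`, of the sum `ℓ_{ns}`
is dominated by the block `[n, 2n)`, so it suffices to show `∑_{n ≤ j < 2n} f(j) < ℓ_n`.
Bounding the block above by a step function breaking at `n + ⌊n/2⌋`, and `ℓ_n` below by one
breaking at `⌈θ/2⌉` and `⌊n/2⌋`, reduces this to a polynomial inequality.
-/

open MeasureTheory ProbabilityTheory Finset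

noncomputable def ellTerm (θ x : ℝ) : ℝ := x / (θ + x) ^ 2

lemma ellFn_eq_sum_range (m : ℕ) (θ : ℝ) : ellFn m θ = ∑ j ∈ range m, ellTerm θ j := by
  rw [ellFn, ← Ico_add_one_right_eq_Icc, sum_Ico_eq_sum_range, Nat.add_sub_cancel]
  refine sum_congr rfl fun j _ => ?_
  rw [ellTerm]
  push_cast
  ring_nf

section ellTerm

variable {θ : ℝ}

lemma ellTerm_nonneg {x : ℝ} (hx : 0 ≤ x) : 0 ≤ ellTerm θ x := by
  unfold ellTerm; positivity

lemma ellTerm_le (hθ : 0 < θ) {x : ℝ} (hx : 0 ≤ x) : ellTerm θ x ≤ 1 / (4 * θ) := by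
  rw [ellTerm, div_le_div_iff₀ (by positivity) (by positivity)]
  nlinarith [sq_nonneg (θ - x)]

lemma ellTerm_le_ellTerm (hθ : 0 < θ) {a b : ℝ} (ha : 0 ≤ a) (hab : a ≤ b) (h : θ ^ 2 ≤ a * b) :
    ellTerm θ b ≤ ellTerm θ a := by
  rw [ellTerm, ellTerm, div_le_div_iff₀ (pow_pos (by linarith) 2) (pow_pos (by linarith) 2)]
  nlinarith [mul_nonneg (sub_nonneg.2 hab) (sub_nonneg.2 h)]

lemma antitoneOn_ellTerm (hθ : 0 < θ) : AntitoneOn (ellTerm θ) (Set.Ici θ) :=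
  fun a ha b _ hab => ellTerm_le_ellTerm hθ (hθ.le.trans ha) hab (by nlinarith [Set.mem_Ici.1 ha])

end ellTerm

lemma four_mul_mul_ellFn_succ_le {θ : ℝ} (hθ : 0 < θ) (m : ℕ) : 4 * θ * ellFn (m + 1) θ ≤ m := by
  rw [ellFn_eq_sum_range, sum_range_succ', Nat.cast_zero, ellTerm, zero_div, add_zero]
  calc 4 * θ * ∑ j ∈ range m, ellTerm θ ↑(j + 1) ≤ 4 * θ * ∑ _j ∈ range m, 1 / (4 * θ) := by
        gcongr with j
        exact ellTerm_le hθ j.succ.cast_nonneg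
    _ = m := by rw [sum_const, card_range, nsmul_eq_mul]; field_simp

lemma ellFn_pos {θ : ℝ} (hθ : 0 < θ) {m : ℕ} (hm : 2 ≤ m) : 0 < ellFn m θ := by
  rw [ellFn_eq_sum_range]
  refine sum_pos' (fun j _ => ellTerm_nonneg j.cast_nonneg) ⟨1, mem_range.2 hm, ?_⟩
  have : 0 < θ + 1 := by linarith
  rw [ellTerm, Nat.cast_one]
  positivity

lemma sum_ellTerm_block_le {θ : ℝ} (hθ : 0 < θ) {n t : ℕ} (hn : θ ≤ n) (ht : 1 ≤ t) :
    ∑ i ∈ range n, ellTerm θ ↑(n * t + i) ≤ ∑ i ∈ range n, ellTerm θ ↑(n + i) := by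
  have hnt : (n : ℝ) ≤ n * t := le_mul_of_one_le_right n.cast_nonneg (by exact_mod_cast ht)
  refine sum_le_sum fun i _ => antitoneOn_ellTerm hθ ?_ ?_ ?_ <;>
    simp only [Set.mem_Ici, Nat.cast_add, Nat.cast_mul] <;> linarith [i.cast_nonneg (α := ℝ)]

lemma ellFn_mul_le {θ : ℝ} (hθ : 0 < θ) {n t : ℕ} (hn : θ ≤ n) (ht : 1 ≤ t) :
    ellFn (n * t) θ ≤ ellFn n θ + (t - 1) * ∑ i ∈ range n, ellTerm θ ↑(n + i) := by
  induction t, ht using Nat.le_induction with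
  | base => simp
  | succ t ht ih =>
    rw [ellFn_eq_sum_range, Nat.mul_succ, sum_range_add, ← ellFn_eq_sum_range, Nat.cast_succ,
      add_sub_cancel_right]
    linarith [sum_ellTerm_block_le hθ hn ht]

lemma sum_ellTerm_add_le_of_le {θ : ℝ} (hθ : 0 < θ) {n h : ℕ} (hn : θ ≤ n) (hh : h ≤ n) :
    ∑ i ∈ range n, ellTerm θ ↑(n + i) ≤ h * ellTerm θ n + (n - h) * ellTerm θ (n + h) := by
  have hsplit := sum_range_add (fun i => ellTerm θ ↑(n + i)) h (n - h)
  rw [Nat.add_sub_cancel' hh] at hsplit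
  have hnear : ∑ i ∈ range h, ellTerm θ ↑(n + i) ≤ h * ellTerm θ n := by
    refine (sum_le_card_nsmul _ _ _ fun i _ => antitoneOn_ellTerm hθ hn ?_ ?_).trans_eq
      (by rw [card_range, nsmul_eq_mul]) <;>
      simp only [Set.mem_Ici, Nat.cast_add] <;> linarith [i.cast_nonneg (α := ℝ)]
  have hfar : ∑ i ∈ range (n - h), ellTerm θ ↑(n + (h + i)) ≤ (n - h) * ellTerm θ (n + h) := by
    refine (sum_le_card_nsmul _ _ _ fun i _ => antitoneOn_ellTerm hθ ?_ ?_ ?_).trans_eq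
      (by rw [card_range, nsmul_eq_mul, Nat.cast_sub hh]) <;>
      simp only [Set.mem_Ici, Nat.cast_add] <;>
      linarith [i.cast_nonneg (α := ℝ), h.cast_nonneg (α := ℝ)]
  simp only [hsplit, ← add_assoc] at hfar ⊢
  linarith

lemma le_ellFn_of_le {θ : ℝ} (hθ : 0 < θ) {w h n : ℕ} (hwh : w ≤ h) (hhn : h ≤ n)
    (hθwh : θ ^ 2 ≤ w * h) : (h - w) * ellTerm θ h + (n - h) * ellTerm θ n ≤ ellFn n θ := by
  have hwh' : (w : ℝ) ≤ h := by exact_mod_cast hwh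
  have hhead : 0 ≤ ∑ i ∈ range w, ellTerm θ i := sum_nonneg fun i _ => ellTerm_nonneg i.cast_nonneg
  have hmid : (h - w) * ellTerm θ h ≤ ∑ i ∈ range (h - w), ellTerm θ ↑(w + i) := by
    refine (card_nsmul_le_sum _ _ _ fun i hi => ?_).trans_eq'
      (by rw [card_range, nsmul_eq_mul, Nat.cast_sub hwh])
    have hi' : (w : ℝ) + i ≤ h := by exact_mod_cast (by rw [mem_range] at hi; omega : w + i ≤ h)
    push_cast
    exact ellTerm_le_ellTerm hθ (by positivity) hi' (by nlinarith [i.cast_nonneg (α := ℝ)])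
  have htail : (n - h) * ellTerm θ n ≤ ∑ i ∈ range (n - h), ellTerm θ ↑(h + i) := by
    refine (card_nsmul_le_sum _ _ _ fun i hi => ?_).trans_eq'
      (by rw [card_range, nsmul_eq_mul, Nat.cast_sub hhn])
    have hi' : (h : ℝ) + i ≤ n := by exact_mod_cast (by rw [mem_range] at hi; omega : h + i ≤ n)
    push_cast
    exact ellTerm_le_ellTerm hθ (by positivity) hi'
      (by nlinarith [i.cast_nonneg (α := ℝ), w.cast_nonneg (α := ℝ)])
  calc (h - w) * ellTerm θ h + (n - h) * ellTerm θ n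
      ≤ ∑ i ∈ range w, ellTerm θ i + ∑ i ∈ range (h - w), ellTerm θ ↑(w + i)
        + ∑ i ∈ range (n - h), ellTerm θ ↑(h + i) := by linarith
    _ = ellFn n θ := by
      conv_rhs => rw [ellFn_eq_sum_range, ← Nat.add_sub_cancel' hhn, ← Nat.add_sub_cancel' hwh]
      rw [sum_range_add, sum_range_add, Nat.add_sub_cancel' hwh]

lemma ellTerm_half_split_lt {θ H N : ℝ} (hθ : 2 ≤ θ) (hN : 4 * θ + 1 ≤ N)
    (hH : 2 * H = N ∨ 2 * H + 1 = N) :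
    H * ellTerm θ N + (N - H) * ellTerm θ (N + H)
      < (H - θ / 2 - 1) * ellTerm θ H + (N - H) * ellTerm θ N := by
  -- In the variables `θ - 2 ≥ 0` and `2H - 4θ - 1 ≥ 0` (resp. `2H - 4θ ≥ 0`), the numerator of
  -- the difference is a polynomial with positive coefficients.
  obtain ⟨e, he, rfl⟩ : ∃ e ≥ 0, θ = 2 + e := ⟨θ - 2, by linarith, by ring⟩
  unfold ellTerm
  rw [← sub_pos]
  rcases hH with rfl | rfl
  · obtain ⟨v, hv, rfl⟩ : ∃ v ≥ 0, H = (4 * (2 + e) + 1 + v) / 2 :=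
      ⟨2 * H - (4 * (2 + e) + 1), by linarith, by ring⟩
    field_simp
    ring_nf
    positivity
  · obtain ⟨v, hv, rfl⟩ : ∃ v ≥ 0, H = (4 * (2 + e) + v) / 2 :=
      ⟨2 * H - 4 * (2 + e), by linarith, by ring⟩
    field_simp
    ring_nf
    positivity

lemma sum_ellTerm_add_lt_ellFn {θ : ℝ} (hθ : 2 ≤ θ) {n : ℕ} (hn : 4 * θ + 1 ≤ n) :
    ∑ i ∈ range n, ellTerm θ ↑(n + i) < ellFn n θ := by
  have hθ0 : 0 < θ := by linarith
  set h := n / 2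
  set w := ⌈θ / 2⌉₊
  have hparity : 2 * (h : ℝ) = n ∨ 2 * (h : ℝ) + 1 = n := by
    rcases Nat.mod_two_eq_zero_or_one n with hmod | hmod
    · left; exact_mod_cast (by omega : 2 * h = n)
    · right; exact_mod_cast (by omega : 2 * h + 1 = n)
  have hw : θ / 2 ≤ w := Nat.le_ceil _
  have hw' : (w : ℝ) < θ / 2 + 1 := Nat.ceil_lt_add_one (by positivity)
  have hh : 2 * θ ≤ h := by rcases hparity with hp | hp <;> linarith
  calc ∑ i ∈ range n, ellTerm θ ↑(n + i)
      ≤ h * ellTerm θ n + (n - h) * ellTerm θ (n + h) :=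
        sum_ellTerm_add_le_of_le hθ0 (by linarith) (Nat.div_le_self n 2)
    _ < (h - θ / 2 - 1) * ellTerm θ h + (n - h) * ellTerm θ n := ellTerm_half_split_lt hθ hn hparity
    _ ≤ (h - w) * ellTerm θ h + (n - h) * ellTerm θ n :=
        add_le_add_left (mul_le_mul_of_nonneg_right (by linarith) (ellTerm_nonneg h.cast_nonneg)) _
    _ ≤ ellFn n θ :=
        le_ellFn_of_le hθ0 (by exact_mod_cast (by linarith : (w : ℝ) ≤ h)) (Nat.div_le_self n 2)
          (by nlinarith)

lemma ellFn_mul_lt {θ : ℝ} (hθ : 2 ≤ θ) {n s : ℕ} (hn : 4 * θ + 1 ≤ n) (hs : 2 ≤ s) :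
    ellFn (n * s) θ < s * ellFn n θ := by
  have hs' : (1 : ℝ) < s := by exact_mod_cast hs
  calc ellFn (n * s) θ ≤ ellFn n θ + (s - 1) * ∑ i ∈ range n, ellTerm θ ↑(n + i) :=
        ellFn_mul_le (by linarith) (by linarith) (by omega)
    _ < ellFn n θ + (s - 1) * ellFn n θ :=
        (add_lt_add_iff_left _).2 <|
          mul_lt_mul_of_pos_left (sum_ellTerm_add_lt_ellFn hθ hn) (by linarith)
    _ = s * ellFn n θ := by ring

theorem th0_part1 (θ : ℝ) (hθ : 2 ≤ θ) (s n : ℕ) (hs : 2 ≤ s)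
    (hn : (n : ℝ) > 1 + ((⌊θ⌋₊ : ℝ) - 1 + 1 / s) / ellFn ⌊θ⌋₊ θ) :
    s * ellFn n θ > ellFn (n * s) θ := by
  have hθ0 : 0 < θ := by linarith
  have hfloor : 2 ≤ ⌊θ⌋₊ := Nat.le_floor (by exact_mod_cast hθ)
  have hthreshold : 4 * θ ≤ ((⌊θ⌋₊ : ℝ) - 1 + 1 / s) / ellFn ⌊θ⌋₊ θ := by
    obtain ⟨m, hm⟩ : ∃ m, ⌊θ⌋₊ = m + 1 := ⟨⌊θ⌋₊ - 1, by omega⟩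
    rw [hm, le_div_iff₀ (ellFn_pos hθ0 (hm ▸ hfloor)), Nat.cast_succ, add_sub_cancel_right]
    have : (0 : ℝ) ≤ 1 / s := by positivity
    linarith [four_mul_mul_ellFn_succ_le hθ0 m]
  exact ellFn_mul_lt hθ (by linarith) hs
end

section
/- If 0 < θ ≤ 1, then for all integers n ≥ 8 and s ≥ 2, s·ℓ_n(θ) > ℓ_{ns}(θ). -/
open MeasureTheory ProbabilityTheory Finset

/-!
Each summand `(i-1)/(θ+i-1)^2` of `ℓ_m(θ)` is at most `1/(i-1)`, so the `n(s-1)` summands of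
`ℓ_{ns}(θ)` with index `i > n` add up to at most `s - 1`. On the other hand `ℓ_n(θ)` decreases
in `θ` and increases in `n`, so for `θ ≤ 1` and `n ≥ 8` it exceeds `ℓ_8(1) ≈ 1.19 > 1`. Hence
`s ℓ_n(θ) = ℓ_n(θ) + (s-1) ℓ_n(θ) > ℓ_n(θ) + (s-1) ≥ ℓ_{ns}(θ)`.
-/

lemma div_add_sq_le_inv {θ x : ℝ} (hθ : 0 ≤ θ) (hx : 0 < x) : x / (θ + x) ^ 2 ≤ x⁻¹ := by
  rw [div_le_iff₀ (by positivity), inv_mul_eq_div, le_div_iff₀ hx]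
  nlinarith

lemma ellFn_eq_add_sum_Ioc (θ : ℝ) {m M : ℕ} (h : m ≤ M) :
    ellFn M θ = ellFn m θ + ∑ i ∈ Ioc m M, ((i : ℝ) - 1) / (θ + i - 1) ^ 2 :=
  (sum_Ioc_consecutive _ m.zero_le h).symm

lemma ellFn_mono (θ : ℝ) : Monotone (ellFn · θ) := fun _ _ h =>
  sum_le_sum_of_subset_of_nonneg (Icc_subset_Icc_right h) fun i hi _ =>
    div_nonneg (by simpa using (mem_Icc.mp hi).1) (sq_nonneg _)

lemma ellFn_antitoneOn (m : ℕ) : AntitoneOn (ellFn m) (Set.Ici 0) := by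
  intro θ hθ θ' _ hθθ'
  refine sum_le_sum fun i hi => ?_
  obtain ⟨hi1, -⟩ := mem_Icc.mp hi
  rcases hi1.eq_or_lt with rfl | hi2
  · simp
  have hi2' : (2 : ℝ) ≤ i := by exact_mod_cast hi2
  have hpos : 0 < θ + i - 1 := by linarith [Set.mem_Ici.mp hθ]
  exact div_le_div_of_nonneg_left (by linarith) (by positivity) (by gcongr)

lemma ellFn_sub_ellFn_le {θ : ℝ} (hθ : 0 ≤ θ) {m M : ℕ} (hm : 0 < m) (h : m ≤ M) :
    ellFn M θ - ellFn m θ ≤ ((M : ℝ) - m) / m := by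
  have hterm : ∀ i ∈ Ioc m M, ((i : ℝ) - 1) / (θ + i - 1) ^ 2 ≤ (m : ℝ)⁻¹ := fun i hi => by
    have hmi : (m : ℝ) + 1 ≤ i := by exact_mod_cast (mem_Ioc.mp hi).1
    have hm' : (0 : ℝ) < m := by exact_mod_cast hm
    rw [add_sub_assoc]
    exact (div_add_sq_le_inv hθ (by linarith)).trans (inv_anti₀ hm' (by linarith))
  calc ellFn M θ - ellFn m θ = ∑ i ∈ Ioc m M, ((i : ℝ) - 1) / (θ + i - 1) ^ 2 := by
        rw [ellFn_eq_add_sum_Ioc θ h]; ring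
    _ ≤ ∑ _i ∈ Ioc m M, (m : ℝ)⁻¹ := sum_le_sum hterm
    _ = ((M : ℝ) - m) / m := by
        rw [sum_const, Nat.card_Ioc, nsmul_eq_mul, Nat.cast_sub h, div_eq_mul_inv]

lemma one_lt_ellFn_one {m : ℕ} (hm : 8 ≤ m) : 1 < ellFn m 1 :=
  calc (1 : ℝ) < ellFn 8 1 := by norm_num [ellFn, sum_Icc_succ_top]
    _ ≤ ellFn m 1 := ellFn_mono 1 hm

theorem cor_small_theta (θ : ℝ) (hθ0 : 0 < θ) (hθ : θ ≤ 1) (n s : ℕ) (hn : 8 ≤ n) (hs : 2 ≤ s) :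
    s * ellFn n θ > ellFn (n * s) θ := by
  have hlow : 1 < ellFn n θ :=
    (one_lt_ellFn_one hn).trans_le (ellFn_antitoneOn n hθ0.le (by norm_num) hθ)
  have htail : ellFn (n * s) θ - ellFn n θ ≤ s - 1 := by
    have hn' : (n : ℝ) ≠ 0 := by positivity
    convert ellFn_sub_ellFn_le hθ0.le (m := n) (M := n * s) (by omega)
      (Nat.le_mul_of_pos_right n (by omega)) using 1
    push_cast
    field_simp
  have hs' : (2 : ℝ) ≤ s := by exact_mod_cast hs
  nlinarith
end

section
/- Let n ≥ 2 and s ≥ 2 be integers and θ real with 1 ≤ θ ≤ (s/log(1+ns))^{1/2} − 1. Then s·ℓ_n(θ) > ℓ_{ns}(θ). -/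
open MeasureTheory ProbabilityTheory Finset

/-!
For `θ ≥ 1` the `i`-th term of `ℓ_m(θ)` is at most `1/i`, and it vanishes for `i = 1`, so
`ℓ_{ns}(θ) ≤ H_{ns} - 1 ≤ log (ns) < log (1 + ns)`. On the other side `ℓ_n(θ)` is at least its
second term `1/(θ+1)^2`, and the hypothesis on `θ` says exactly `log (1 + ns) ≤ s/(θ+1)^2`.
-/

lemma ellFn_term_nonneg {i : ℕ} (hi : 1 ≤ i) (θ : ℝ) : 0 ≤ ((i : ℝ) - 1) / (θ + i - 1) ^ 2 := by
  have : (1 : ℝ) ≤ i := by exact_mod_cast hi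
  exact div_nonneg (by linarith) (sq_nonneg _)

lemma ellFn_term_le_inv {i : ℕ} (hi : 1 ≤ i) {θ : ℝ} (hθ : 1 ≤ θ) :
    ((i : ℝ) - 1) / (θ + i - 1) ^ 2 ≤ (i : ℝ)⁻¹ := by
  have hi' : (1 : ℝ) ≤ i := by exact_mod_cast hi
  rw [div_le_iff₀ (by nlinarith), inv_mul_eq_div, le_div_iff₀ (by linarith)]
  nlinarith

lemma ellFn_le_log {m : ℕ} (hm : 1 ≤ m) {θ : ℝ} (hθ : 1 ≤ θ) : ellFn m θ ≤ Real.log m := by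
  have hsplit : ∀ f : ℕ → ℝ, ∑ i ∈ Icc 1 m, f i = f 1 + ∑ i ∈ Ioc 1 m, f i := fun f => by
    rw [Icc_eq_cons_Ioc hm, sum_cons]
  have hharmonic : (harmonic m : ℝ) = 1 + ∑ i ∈ Ioc 1 m, (i : ℝ)⁻¹ := by
    rw [harmonic_eq_sum_Icc]
    push_cast
    rw [hsplit]
    norm_num
  calc ellFn m θ = ∑ i ∈ Ioc 1 m, ((i : ℝ) - 1) / (θ + i - 1) ^ 2 := by
        rw [ellFn, hsplit]
        norm_num
    _ ≤ ∑ i ∈ Ioc 1 m, (i : ℝ)⁻¹ :=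
        sum_le_sum fun i hi => ellFn_term_le_inv (mem_Ioc.mp hi).1.le hθ
    _ ≤ Real.log m := by linarith [harmonic_le_one_add_log m]

lemma inv_add_one_sq_le_ellFn {n : ℕ} (hn : 2 ≤ n) (θ : ℝ) : 1 / (θ + 1) ^ 2 ≤ ellFn n θ := by
  have h2 : 2 ∈ Icc 1 n := mem_Icc.mpr ⟨by norm_num, hn⟩
  calc 1 / (θ + 1) ^ 2 = ((2 : ℕ) - 1) / (θ + (2 : ℕ) - 1) ^ 2 := by norm_num; ring_nf
    _ ≤ ellFn n θ := single_le_sum (fun i hi => ellFn_term_nonneg (mem_Icc.mp hi).1 θ) h2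

theorem thn (n s : ℕ) (hn : 2 ≤ n) (hs : 2 ≤ s) (θ : ℝ)
    (hθ1 : 1 ≤ θ) (hθ2 : θ ≤ Real.sqrt (s / Real.log (1 + n * s)) - 1) :
    s * ellFn n θ > ellFn (n * s) θ := by
  have hns : 1 ≤ n * s := Nat.mul_pos (by omega) (by omega)
  have hns' : (1 : ℝ) ≤ n * s := by exact_mod_cast hns
  have hlog_pos : 0 < Real.log (1 + n * s) := Real.log_pos (by linarith)
  have hθ_sq : (θ + 1) ^ 2 ≤ s / Real.log (1 + n * s) := by
    rw [← Real.sq_sqrt (by positivity : (0 : ℝ) ≤ s / Real.log (1 + n * s))]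
    gcongr
    linarith
  have hlog_le : Real.log (1 + n * s) ≤ s * (1 / (θ + 1) ^ 2) := by
    rw [mul_one_div, le_div_iff₀ (by positivity)]
    rwa [le_div_iff₀ hlog_pos, mul_comm] at hθ_sq
  calc ellFn (n * s) θ ≤ Real.log (n * s) := by
        exact_mod_cast ellFn_le_log hns hθ1
    _ < Real.log (1 + n * s) := Real.log_lt_log (by linarith) (by linarith)
    _ ≤ s * (1 / (θ + 1) ^ 2) := hlog_le
    _ ≤ s * ellFn n θ := mul_le_mul_of_nonneg_left (inv_add_one_sq_le_ellFn hn θ) s.cast_nonneg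
end

section
/- For real θ > 0 and positive integer n, ℓ_n(θ) < log(1 + n/θ) + (1/θ − 1)·n/(θ+n). In particular, if θ ≥ 1 then ℓ_n(θ) < log(1 + n/θ). -/
open MeasureTheory ProbabilityTheory Finset

/-!
With `x = θ + k`, the `k`-th term `k / x²` of `ellFn n θ` is at most
`1 / (x + 1) + (1 - θ) / (x (x + 1))`, and `1 / (x + 1) < log (1 + 1 / x)`.
Summed over `k < n`, both bounds telescope: to `log (1 + n / θ)` and to `(1 - θ) n / (θ (θ + n))`.
-/

theorem one_div_add_one_lt_log_div {x : ℝ} (hx : 0 < x) :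
    1 / (x + 1) < Real.log ((x + 1) / x) := by
  have hx1 : 0 < x + 1 := by linarith
  have hlt : Real.log (x / (x + 1)) < x / (x + 1) - 1 :=
    Real.log_lt_sub_one_of_pos (by positivity) (by rw [ne_eq, div_eq_one_iff_eq hx1.ne']; linarith)
  rw [← inv_div x, Real.log_inv]
  have : x / (x + 1) - 1 = -(1 / (x + 1)) := by field_simp; ring
  linarith

theorem sum_range_log_div {a : ℝ} (ha : 0 < a) (n : ℕ) :
    ∑ k ∈ range n, Real.log ((a + k + 1) / (a + k)) = Real.log ((a + n) / a) := by
  have hpos (x : ℕ) : 0 < a + x := by positivity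
  rw [Real.log_div (hpos n).ne' ha.ne']
  convert sum_range_sub (fun k : ℕ ↦ Real.log (a + k)) n using 2 with k
  · rw [Real.log_div (by linarith [hpos k]) (hpos k).ne']
    push_cast
    ring_nf
  · simp

theorem sum_range_one_div_mul_succ {a : ℝ} (ha : 0 < a) (n : ℕ) :
    ∑ k ∈ range n, 1 / ((a + k) * (a + k + 1)) = n / (a * (a + n)) := by
  have hpos (x : ℕ) : 0 < a + x := by positivity
  have htel := sum_range_sub (fun k : ℕ ↦ -1 / (a + k)) n
  convert htel using 2 with k
  · have := hpos k
    push_cast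
    field_simp
    ring
  · have := hpos n
    simp only [CharP.cast_eq_zero, add_zero]
    field_simp
    ring

theorem ellFn_eq_sum_range_s13 (n : ℕ) (θ : ℝ) :
    ellFn n θ = ∑ k ∈ range n, (k : ℝ) / (θ + k) ^ 2 := by
  rw [ellFn, ← Ico_add_one_right_eq_Icc, sum_Ico_eq_sum_range, Nat.add_sub_cancel]
  refine sum_congr rfl fun k _ ↦ ?_
  push_cast
  ring_nf

theorem div_sq_lt_log_div_add {θ k : ℝ} (hθ : 0 < θ) (hk : 0 ≤ k) :
    k / (θ + k) ^ 2 < Real.log ((θ + k + 1) / (θ + k)) + (1 - θ) / ((θ + k) * (θ + k + 1)) := by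
  set x := θ + k
  have hx : 0 < x := by positivity
  calc k / x ^ 2 ≤ (k + 1) / (x * (x + 1)) := by
        rw [div_le_div_iff₀ (by positivity) (by positivity)]
        nlinarith
    _ = 1 / (x + 1) + (1 - θ) / (x * (x + 1)) := by
        field_simp
        ring
    _ < _ := by gcongr; exact one_div_add_one_lt_log_div hx

theorem ellFn_lt_log_add {θ : ℝ} (hθ : 0 < θ) {n : ℕ} (hn : 1 ≤ n) :
    ellFn n θ < Real.log ((θ + n) / θ) + (1 - θ) * (n / (θ * (θ + n))) := by
  rw [ellFn_eq_sum_range_s13, ← sum_range_log_div hθ, ← sum_range_one_div_mul_succ hθ, mul_sum,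
    ← sum_add_distrib]
  refine sum_lt_sum_of_nonempty (nonempty_range_iff.mpr (by omega)) fun k _ ↦ ?_
  simpa only [mul_one_div] using div_sq_lt_log_div_add hθ k.cast_nonneg

theorem ell_lt (θ : ℝ) (hθ : 0 < θ) (n : ℕ) (hn : 1 ≤ n) :
    ellFn n θ < Real.log (1 + n / θ) + (1 / θ - 1) * (n / (θ + n)) ∧
    (1 ≤ θ → ellFn n θ < Real.log (1 + n / θ)) := by
  have hlt := ellFn_lt_log_add hθ hn
  have hlog : (θ + n) / θ = 1 + n / θ := by field_simp
  have hcoef : (1 - θ) * (n / (θ * (θ + n))) = (1 / θ - 1) * (n / (θ + n)) := by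
    have : 0 < θ + n := by positivity
    field_simp
  rw [hlog, hcoef] at hlt
  refine ⟨hlt, fun hθ1 ↦ hlt.trans_le ?_⟩
  have hcoef_nonpos : 1 / θ - 1 ≤ 0 := by
    rw [sub_nonpos, div_le_one hθ]; exact hθ1
  have : (1 / θ - 1) * (n / (θ + n)) ≤ 0 :=
    mul_nonpos_of_nonpos_of_nonneg hcoef_nonpos (by positivity)
  linarith
end

section
/- For positive integers a ≤ b and real θ > 0, Σ_{i=a}^b i/(i+θ)^2 < log((b+θ)/(a−1+θ)) − θ(b−a+1)/((a+θ)(b+1+θ)). -/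
open MeasureTheory ProbabilityTheory Finset

/-!
With `F x = log (x - 1 + θ) + θ / (x + θ)` the right-hand side is `F (b + 1) - F a`, so it suffices to
bound the `i`-th term by `F (i + 1) - F i`. Writing `y = i + θ > 1`, this reads
`1 / y - θ / y ^ 2 < log y - log (y - 1) - θ / (y (y + 1))`, which follows from
`1 / y < log y - log (y - 1)` (i.e. `log (1 - 1 / y) < -1 / y`) and `y (y + 1) ≥ y ^ 2`.
-/

lemma Real.one_div_lt_log_sub_log_sub_one {y : ℝ} (hy : 1 < y) :
    1 / y < Real.log y - Real.log (y - 1) := by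
  have hy0 : 0 < y := by linarith
  have hlog : Real.log ((y - 1) / y) < (y - 1) / y - 1 :=
    Real.log_lt_sub_one_of_pos (div_pos (by linarith) hy0) (by
      rw [Ne, div_eq_one_iff_eq hy0.ne']
      linarith)
  rw [Real.log_div (by linarith) hy0.ne'] at hlog
  have : (y - 1) / y - 1 = -(1 / y) := by field_simp; ring
  linarith

lemma div_add_sq_lt_log_sub {t θ : ℝ} (ht : 1 < t + θ) (hθ : 0 ≤ θ) :
    t / (t + θ) ^ 2 <
      (Real.log (t + θ) + θ / (t + 1 + θ)) - (Real.log (t - 1 + θ) + θ / (t + θ)) := by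
  set y := t + θ with hy
  have hy0 : 0 < y := by linarith
  have hlog := Real.one_div_lt_log_sub_log_sub_one ht
  have hsq : θ / (y * (y + 1)) ≤ θ / y ^ 2 :=
    div_le_div_of_nonneg_left hθ (by positivity) (by nlinarith)
  have hsplit : t / y ^ 2 = 1 / y - θ / y ^ 2 := by field_simp; ring
  have hdiff : θ / (t + θ) - θ / (t + 1 + θ) = θ / (y * (y + 1)) := by
    rw [show t + 1 + θ = y + 1 by ring, ← hy]; field_simp; ring
  rw [show t - 1 + θ = y - 1 by ring]
  linarith

theorem sum_frac_lt (a b : ℕ) (ha : 1 ≤ a) (hab : a ≤ b) (θ : ℝ) (hθ : 0 < θ) :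
    ∑ i ∈ Finset.Icc a b, (i : ℝ) / (i + θ) ^ 2 <
      Real.log ((b + θ) / ((a : ℝ) - 1 + θ)) - θ * ((b : ℝ) - a + 1) / ((a + θ) * (b + 1 + θ)) := by
  set F : ℕ → ℝ := fun n ↦ Real.log ((n : ℝ) - 1 + θ) + θ / (n + θ)
  have hterm : ∀ i ∈ Icc a b, (i : ℝ) / (i + θ) ^ 2 < F (i + 1) - F i := by
    intro i hi
    have hi : (1 : ℝ) ≤ i := by exact_mod_cast ha.trans (mem_Icc.mp hi).1
    simpa [F] using div_add_sq_lt_log_sub (t := i) (by linarith) hθ.le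
  calc ∑ i ∈ Icc a b, (i : ℝ) / (i + θ) ^ 2
      < ∑ i ∈ Icc a b, (F (i + 1) - F i) := sum_lt_sum_of_nonempty ⟨a, by simp [hab]⟩ hterm
    _ = F (b + 1) - F a := sum_Icc_sub hab F
    _ = _ := by
      have ha' : (1 : ℝ) ≤ a := by exact_mod_cast ha
      have hb' : (a : ℝ) ≤ b := by exact_mod_cast hab
      simp only [F, Nat.cast_add, Nat.cast_one, add_sub_cancel_right]
      rw [Real.log_div (by linarith) (by linarith)]
      field_simp
      ring
end
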